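/- Let S be a Polish space, d ∈ ℕ, and let μ = μ₁ ⊗ ⋯ ⊗ μ_d be a product probability measure on S^d. For any probability measure ν on S^d with ν ≪ μ and any nonempty B ⊆ {1,…,d}, the relative entropy satisfies the chain rule H(ν | μ) = H(ν^(B) | μ^(B)) + H(ν | ν^(B) ⊗ μ^(Bᶜ)), where ν^(B) denotes the marginal of ν on the coordinates in B and μ^(Bᶜ) the product of the μ_k for k ∉ B. -/

import Mathlib

open MeasureTheory ProbabilityTheory Real

-- Relative entropy (Kullback–Leibler divergence) with values in `EReal`.
open scoped Classical in
noncomputable def KL {X : Type*} [MeasurableSpace X] (ν μ : Measure X) : EReal :=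
  if ν ≪ μ ∧ Integrable (fun x => Real.log (ν.rnDeriv μ x).toReal) ν
  then ((∫ x, Real.log (ν.rnDeriv μ x).toReal ∂ν : ℝ) : EReal) else ⊤

/-- Marginal of a measure on `S^d` on the coordinates in `B`. -/
noncomputable def marg {S : Type*} [MeasurableSpace S] {d : ℕ}
    (ν : Measure (Fin d → S)) (B : Set (Fin d)) : Measure (B → S) :=
  ν.map (fun x (i : B) => x (i : Fin d))

/-- The identification `S^d ≅ S^B × S^{Bᶜ}`. -/
def splitMap {S : Type*} {d : ℕ} (B : Set (Fin d)) :
    (Fin d → S) → ((B → S) × ((↥Bᶜ) → S)) :=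
  fun x => (fun i => x (i : Fin d), fun i => x (i : Fin d))

/-!
Along the identification `S^d ≃ S^B × S^{Bᶜ}` the product measure becomes `μ^(B) ⊗ μ^(Bᶜ)`, and
relative entropy is invariant under measurable equivalences. Since `S^{Bᶜ}` is standard Borel,
`ν` disintegrates as `ν^(B) ⊗ₘ κ`, while `μ^(B) ⊗ μ^(Bᶜ)` and `ν^(B) ⊗ μ^(Bᶜ)` are
composition-products with the constant kernel `μ^(Bᶜ)`; the claim is then the chain rule
`klDiv_compProd_eq_add`. For measures of equal mass `KL` agrees with `klDiv`, whose mass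
correction term vanishes.
-/

open InformationTheory

section KLDivergence

variable {X Y : Type*} [MeasurableSpace X] [MeasurableSpace Y]

lemma KL_eq_klDiv {ν μ : Measure X} [IsFiniteMeasure ν] [IsFiniteMeasure μ]
    (h : ν Set.univ = μ Set.univ) : KL ν μ = klDiv ν μ := by
  by_cases hfin : ν ≪ μ ∧ Integrable (fun x => Real.log (ν.rnDeriv μ x).toReal) ν
  · obtain ⟨hac, hint⟩ := hfin
    have hreal : μ.real Set.univ = ν.real Set.univ := by simp [measureReal_def, h]
    have hnonneg := integral_llr_add_sub_measure_univ_nonneg hac hint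
    rw [hreal, add_sub_cancel_right] at hnonneg
    rw [KL, if_pos ⟨hac, hint⟩, klDiv_of_ac_of_integrable hac hint, hreal, add_sub_cancel_right,
      EReal.coe_ennreal_ofReal, max_eq_left hnonneg]
    rfl
  · rw [KL, if_neg hfin, klDiv_eq_top_iff.mpr fun hac hint => hfin ⟨hac, hint⟩]
    rfl

lemma klDiv_map_measurableEquiv (e : X ≃ᵐ Y) (ν μ : Measure X) [IsFiniteMeasure ν]
    [IsFiniteMeasure μ] : klDiv (ν.map e) (μ.map e) = klDiv ν μ := by
  refine le_antisymm (klDiv_map_le ν μ e.measurable) ?_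
  simpa only [MeasurableEquiv.map_symm_map] using
    klDiv_map_le (ν.map e) (μ.map e) e.symm.measurable

lemma klDiv_prod_eq_add [StandardBorelSpace Y] (ν : Measure (X × Y)) [IsFiniteMeasure ν]
    (α : Measure X) [IsFiniteMeasure α] (β : Measure Y) [IsProbabilityMeasure β] :
    klDiv ν (α.prod β) = klDiv ν.fst α + klDiv ν (ν.fst.prod β) := by
  have : Nonempty Y := nonempty_of_isProbabilityMeasure β
  rw [← Measure.compProd_const, ← Measure.compProd_const, ← ν.disintegrate ν.condKernel,
    Measure.fst_compProd]
  exact klDiv_compProd_eq_add _ _ _ _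

end KLDivergence

section Marginals

variable {S : Type*} [MeasurableSpace S] {d : ℕ}

open scoped Classical in
lemma splitMap_eq_piEquivPiSubtypeProd (B : Set (Fin d)) :
    splitMap (S := S) B = MeasurableEquiv.piEquivPiSubtypeProd (fun _ => S) (· ∈ B) :=
  rfl

lemma measurable_splitMap (B : Set (Fin d)) : Measurable (splitMap (S := S) B) := by
  classical
  rw [splitMap_eq_piEquivPiSubtypeProd]
  exact MeasurableEquiv.measurable _

instance isProbabilityMeasure_marg (ν : Measure (Fin d → S)) [IsProbabilityMeasure ν]
    (B : Set (Fin d)) : IsProbabilityMeasure (marg ν B) :=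
  Measure.isProbabilityMeasure_map
    (measurable_pi_lambda _ fun _ => measurable_pi_apply _).aemeasurable

instance isProbabilityMeasure_map_splitMap (ν : Measure (Fin d → S)) [IsProbabilityMeasure ν]
    (B : Set (Fin d)) : IsProbabilityMeasure (ν.map (splitMap B)) :=
  Measure.isProbabilityMeasure_map (measurable_splitMap B).aemeasurable

lemma fst_map_splitMap (ν : Measure (Fin d → S)) (B : Set (Fin d)) :
    (ν.map (splitMap B)).fst = marg ν B := by
  rw [Measure.fst, Measure.map_map measurable_fst (measurable_splitMap B)]
  rfl

lemma snd_map_splitMap (ν : Measure (Fin d → S)) (B : Set (Fin d)) :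
    (ν.map (splitMap B)).snd = marg ν Bᶜ := by
  rw [Measure.snd, Measure.map_map measurable_snd (measurable_splitMap B)]
  rfl

lemma map_splitMap_pi (μs : Fin d → Measure S) [∀ i, IsProbabilityMeasure (μs i)]
    (B : Set (Fin d)) :
    (Measure.pi μs).map (splitMap B)
      = (marg (Measure.pi μs) B).prod (marg (Measure.pi μs) Bᶜ) := by
  classical
  rw [← fst_map_splitMap, ← snd_map_splitMap, splitMap_eq_piEquivPiSubtypeProd,
    (measurePreserving_piEquivPiSubtypeProd μs (· ∈ B)).map_eq, Measure.fst_prod,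
    Measure.snd_prod]

end Marginals

theorem relativeEntropy_chain_rule_general
    {S : Type*} [MeasurableSpace S] [TopologicalSpace S] [PolishSpace S] [BorelSpace S]
    {d : ℕ} (μs : Fin d → Measure S) [∀ i, IsProbabilityMeasure (μs i)]
    (ν : Measure (Fin d → S)) [IsProbabilityMeasure ν]
    (B : Set (Fin d)) :
    KL ν (Measure.pi μs)
      = KL (marg ν B) (marg (Measure.pi μs) B)
        + KL (ν.map (splitMap B)) ((marg ν B).prod (marg (Measure.pi μs) Bᶜ)) := by
  rw [KL_eq_klDiv (by simp), KL_eq_klDiv (by simp), KL_eq_klDiv (by simp),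
    ← EReal.coe_ennreal_add]
  congr 1
  classical
  calc klDiv ν (Measure.pi μs)
      = klDiv (ν.map (splitMap B)) ((Measure.pi μs).map (splitMap B)) := by
        rw [splitMap_eq_piEquivPiSubtypeProd, klDiv_map_measurableEquiv]
    _ = klDiv (marg ν B) (marg (Measure.pi μs) B)
        + klDiv (ν.map (splitMap B)) ((marg ν B).prod (marg (Measure.pi μs) Bᶜ)) := by
      rw [map_splitMap_pi, klDiv_prod_eq_add, fst_map_splitMap]

/-- Chain rule for relative entropy:
`H(ν|μ) = H(ν^(B)|μ^(B)) + H(ν | ν^(B) ⊗ μ^(Bᶜ))` for a product reference measure `μ`. -/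
theorem relativeEntropy_chain_rule
    {S : Type*} [MeasurableSpace S] [TopologicalSpace S] [PolishSpace S] [BorelSpace S]
    {d : ℕ} (μs : Fin d → Measure S) [∀ i, IsProbabilityMeasure (μs i)]
    (ν : Measure (Fin d → S)) [IsProbabilityMeasure ν]
    (hac : ν ≪ Measure.pi μs)
    (B : Set (Fin d)) (hB : B.Nonempty) :
    KL ν (Measure.pi μs)
      = KL (marg ν B) (marg (Measure.pi μs) B)
        + KL (ν.map (splitMap B)) ((marg ν B).prod (marg (Measure.pi μs) Bᶜ)) :=
  relativeEntropy_chain_rule_general μs ν B
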